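/- Let h, g satisfy Assumption A1 and condition (70) and let α > 0. Assume additionally that L := lim_{ε→0⁺} ∫_ε^{y₀} (−αx+h(x))/g(x) dx exists in (−∞,+∞], and for y > 0 define ∫_0^y (−αx+h(x))/g(x) dx := L + ∫_{y₀}^y (−αx+h(x))/g(x) dx, with value in (−∞,+∞]. Then ∫_0^∞ (h(y)/g(y)) exp(∫_{y₀}^y (−αx+h(x))/g(x) dx) dy ≤ 0 holds if and only if ∫_0^∞ (αy/g(y)) exp(∫_0^y (−αx+h(x))/g(x) dx) dy ≤ 1, where the latter integral is interpreted as +∞ if L = +∞. -/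

import Mathlib

open Filter Set MeasureTheory intervalIntegral
open scoped ENNReal

/-- `f` is locally Lipschitz continuous on the set `s`. -/
def LocLipOn (f : ℝ → ℝ) (s : Set ℝ) : Prop :=
  ∀ x ∈ s, ∃ (K : NNReal) (t : Set ℝ), t ∈ nhdsWithin x s ∧ LipschitzOnWith K f t

lemma locLip_continuousAt {f : ℝ → ℝ} (hf : LocLipOn f (Ici 0)) {x : ℝ} (hx : 0 < x) :
    ContinuousAt f x := by
  obtain ⟨K, t, ht, hlip⟩ := hf x hx.le
  have h1 : Ici (0:ℝ) ∈ nhds x := Ici_mem_nhds hx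
  have h2 : t ∈ nhds x := by rwa [nhdsWithin_eq_nhds.2 h1] at ht
  exact hlip.continuousOn.continuousAt h2

lemma ofReal_intervalIntegral_eq {f : ℝ → ℝ} {a b : ℝ} (hab : a ≤ b)
    (hc : ContinuousOn f (Icc a b)) (hnn : ∀ x ∈ Ioo a b, 0 ≤ f x) :
    ENNReal.ofReal (∫ x in a..b, f x) = ∫⁻ x in Ioo a b, ENNReal.ofReal (f x) := by
  rw [intervalIntegral.integral_of_le hab, MeasureTheory.integral_Ioc_eq_integral_Ioo,
    MeasureTheory.ofReal_integral_eq_lintegral_ofReal]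
  · exact (hc.integrableOn_Icc).mono_set Ioo_subset_Icc_self
  · exact (ae_restrict_iff' measurableSet_Ioo).2 (ae_of_all _ hnn)

lemma lintegral_iSup_sets {f : ℝ → ℝ≥0∞} {s : ℕ → Set ℝ} (hs : ∀ n, MeasurableSet (s n))
    (hmono : Monotone s) (hf : AEMeasurable f (volume.restrict (⋃ n, s n))) :
    ∫⁻ x in ⋃ n, s n, f x = ⨆ n, ∫⁻ x in s n, f x := by
  set U := ⋃ n, s n with hU
  have hUm : MeasurableSet U := MeasurableSet.iUnion hs
  have key : ∀ n, ∫⁻ x in U, (s n).indicator f x = ∫⁻ x in s n, f x := by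
    intro n
    rw [MeasureTheory.lintegral_indicator (hs n), Measure.restrict_restrict (hs n),
      Set.inter_eq_self_of_subset_left (Set.subset_iUnion s n)]
  calc ∫⁻ x in U, f x = ∫⁻ x in U, ⨆ n, (s n).indicator f x := by
        refine setLIntegral_congr_fun hUm (fun x hx => ?_)
        obtain ⟨n, hn⟩ := Set.mem_iUnion.1 hx
        refine le_antisymm ?_ (iSup_le fun m => Set.indicator_le_self _ _ _)
        exact le_trans (le_of_eq (Set.indicator_of_mem hn f).symm)
          (le_iSup (fun n => (s n).indicator f x) n)
    _ = ⨆ n, ∫⁻ x in U, (s n).indicator f x := by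
        refine MeasureTheory.lintegral_iSup' (fun n => hf.indicator (hs n))
          (ae_of_all _ fun x => ?_)
        intro m n hmn
        exact Set.indicator_le_indicator_of_subset (hmono hmn) (fun _ => zero_le) x
    _ = ⨆ n, ∫⁻ x in s n, f x := by simp only [key]

/-- Equivalence of conditions (71) and (72) in Lemma 5.1: assuming
`L = lim_{ε→0⁺} ∫_ε^{y₀} (-αx+h(x))/g(x) dx` exists in `(-∞,+∞]`, the condition
`∫_0^∞ (h(y)/g(y)) exp(∫_{y₀}^y (-αx+h(x))/g(x) dx) dy ≤ 0` holds iff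
`∫_0^∞ (αy/g(y)) exp(L + ∫_{y₀}^y (-αx+h(x))/g(x) dx) dy ≤ 1`, the latter integral
being `+∞` (so the condition failing) when `L = +∞`. -/
theorem stmt9 (h g : ℝ → ℝ)
    (hhlip : LocLipOn h (Ici 0)) (hglip : LocLipOn g (Ici 0))
    (hh0 : h 0 = 0) (hg0 : g 0 = 0)
    (hgnn : ∀ x ∈ Ici (0:ℝ), 0 ≤ g x) (hgpos : ∀ x ∈ Ioi (0:ℝ), 0 < g x)
    (hgrow : ∃ Cg : ℝ, ∀ᶠ x in atTop, Real.sqrt (g x) / x ≤ Cg)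
    (y₀ : ℝ) (hy₀ : 0 < y₀)
    (hhge : ∀ x ∈ Icc (0:ℝ) y₀, 0 ≤ h x) (hhle : ∀ x ∈ Ici y₀, h x ≤ 0)
    (α : ℝ) (hα : 0 < α)
    (ψ : ℝ → ℝ)
    (hψ : ∀ y, ψ y = h y / g y * Real.exp (∫ x in y₀..y, (-α * x + h x) / g x))
    (hL : (∃ L : ℝ, Tendsto (fun ε => ∫ x in ε..y₀, (-α * x + h x) / g x)
            (nhdsWithin 0 (Ioi 0)) (nhds L)) ∨
          Tendsto (fun ε => ∫ x in ε..y₀, (-α * x + h x) / g x)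
            (nhdsWithin 0 (Ioi 0)) atTop) :
    (∫⁻ y in Ioi (0:ℝ), ENNReal.ofReal (ψ y)) ≤
        (∫⁻ y in Ioi (0:ℝ), ENNReal.ofReal (-ψ y)) ↔
      ∃ L : ℝ, Tendsto (fun ε => ∫ x in ε..y₀, (-α * x + h x) / g x)
          (nhdsWithin 0 (Ioi 0)) (nhds L) ∧
        (∫⁻ y in Ioi (0:ℝ), ENNReal.ofReal
          (α * y / g y * Real.exp (L + ∫ x in y₀..y, (-α * x + h x) / g x))) ≤ 1 := by
  classical
  set q : ℝ → ℝ := fun x => (-α * x + h x) / g x with hq_def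
  set p : ℝ → ℝ := fun x => α * x / g x with hp_def
  set F : ℝ → ℝ := fun y => ∫ x in y₀..y, q x with hF_def
  set φ : ℝ → ℝ := fun y => Real.exp (F y) with hφ_def
  -- continuity
  have hgc : ∀ x ∈ Ioi (0:ℝ), ContinuousAt g x := fun x hx => locLip_continuousAt hglip hx
  have hhc : ∀ x ∈ Ioi (0:ℝ), ContinuousAt h x := fun x hx => locLip_continuousAt hhlip hx
  have hgne : ∀ x ∈ Ioi (0:ℝ), g x ≠ 0 := fun x hx => (hgpos x hx).ne'
  have hqc : ∀ x ∈ Ioi (0:ℝ), ContinuousAt q x := by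
    intro x hx
    exact ((continuousAt_const.mul continuousAt_id).add (hhc x hx)).div (hgc x hx) (hgne x hx)
  have hpc : ∀ x ∈ Ioi (0:ℝ), ContinuousAt p x := by
    intro x hx
    exact (continuousAt_const.mul continuousAt_id).div (hgc x hx) (hgne x hx)
  have hIccsub : ∀ {a b : ℝ}, 0 < a → Icc a b ⊆ Ioi (0:ℝ) :=
    fun {a b} ha x hx => lt_of_lt_of_le ha hx.1
  have huIccsub : ∀ {a b : ℝ}, 0 < a → 0 < b → uIcc a b ⊆ Ioi (0:ℝ) :=
    fun {a b} ha hb x hx => lt_of_lt_of_le (lt_min ha hb) hx.1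
  have hqint : ∀ a b : ℝ, 0 < a → 0 < b → IntervalIntegrable q volume a b := by
    intro a b ha hb
    exact ContinuousOn.intervalIntegrable
      (fun x hx => ((hqc x (huIccsub ha hb hx)).continuousWithinAt))
  have hFd : ∀ b ∈ Ioi (0:ℝ), HasDerivAt F (q b) b := by
    intro b hb
    exact intervalIntegral.integral_hasDerivAt_right (hqint y₀ b hy₀ hb)
      (ContinuousAt.stronglyMeasurableAtFilter isOpen_Ioi hqc b hb) (hqc b hb)
  have hφd : ∀ b ∈ Ioi (0:ℝ), HasDerivAt φ (q b * φ b) b := by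
    intro b hb
    simpa [hφ_def, mul_comm] using (hFd b hb).exp
  have hφc : ∀ x ∈ Ioi (0:ℝ), ContinuousAt φ x := fun x hx => (hφd x hx).continuousAt
  have hφpos : ∀ y, 0 < φ y := fun y => Real.exp_pos _
  have hφy₀ : φ y₀ = 1 := by simp [hφ_def, hF_def]
  -- decomposition ψ = qφ + pφ
  have hψ_eq : ∀ x, ψ x = q x * φ x + p x * φ x := by
    intro x
    have h1 : q x + p x = h x / g x := by
      rw [hq_def, hp_def]
      simp only [← add_div]
      ring_nf
    rw [hψ x, ← h1, add_mul]
  have hψc : ∀ x ∈ Ioi (0:ℝ), ContinuousAt ψ x := by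
    intro x hx
    have : ContinuousAt (fun x => q x * φ x + p x * φ x) x :=
      ((hqc x hx).mul (hφc x hx)).add ((hpc x hx).mul (hφc x hx))
    exact this.congr (by
      filter_upwards with y
      exact (hψ_eq y).symm)
  -- key real identity
  have K1 : ∀ a b : ℝ, 0 < a → a ≤ b →
      (∫ x in a..b, ψ x) + φ a = φ b + ∫ x in a..b, p x * φ x := by
    intro a b ha hab
    have hb : 0 < b := lt_of_lt_of_le ha hab
    have hsub := huIccsub (a := a) (b := b) ha hb
    have hint1 : IntervalIntegrable (fun x => q x * φ x) volume a b :=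
      ContinuousOn.intervalIntegrable (fun x hx =>
        ((hqc x (hsub hx)).mul (hφc x (hsub hx))).continuousWithinAt)
    have hint2 : IntervalIntegrable (fun x => p x * φ x) volume a b :=
      ContinuousOn.intervalIntegrable (fun x hx =>
        ((hpc x (hsub hx)).mul (hφc x (hsub hx))).continuousWithinAt)
    have h1 : ∫ x in a..b, q x * φ x = φ b - φ a :=
      intervalIntegral.integral_eq_sub_of_hasDerivAt (fun t ht => hφd t (hsub ht)) hint1
    have h2 : (∫ x in a..b, ψ x)
        = (∫ x in a..b, q x * φ x) + ∫ x in a..b, p x * φ x := by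
      rw [← intervalIntegral.integral_add hint1 hint2]
      exact intervalIntegral.integral_congr (fun x _ => hψ_eq x)
    rw [h2, h1]; ring
  -- signs
  have hψnn : ∀ y ∈ Icc (0:ℝ) y₀, 0 ≤ ψ y := by
    intro y hy
    rw [hψ y]
    exact mul_nonneg (div_nonneg (hhge y hy) (hgnn y hy.1)) (Real.exp_pos _).le
  have hψnp : ∀ y ∈ Ici y₀, ψ y ≤ 0 := by
    intro y hy
    rw [hψ y]
    exact mul_nonpos_of_nonpos_of_nonneg
      (div_nonpos_of_nonpos_of_nonneg (hhle y hy) (hgnn y (le_trans hy₀.le hy)))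
      (Real.exp_pos _).le
  have hpφnn : ∀ y, 0 ≤ y → 0 ≤ p y * φ y := by
    intro y hy
    exact mul_nonneg (div_nonneg (mul_nonneg hα.le hy) (hgnn y hy)) (hφpos y).le
  have hpφpos : ∀ y, 0 < y → 0 < p y * φ y := by
    intro y hy
    exact mul_pos (div_pos (mul_pos hα hy) (hgpos y hy)) (hφpos y)
  -- the four quantities
  set A := ∫⁻ y in Ioo 0 y₀, ENNReal.ofReal (ψ y) with hA_def
  set B := ∫⁻ y in Ioi y₀, ENNReal.ofReal (-ψ y) with hB_def
  set C₁ := ∫⁻ y in Ioo 0 y₀, ENNReal.ofReal (p y * φ y) with hC₁_def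
  set C₂ := ∫⁻ y in Ioi y₀, ENNReal.ofReal (p y * φ y) with hC₂_def
  -- splitting the lintegrals over (0,∞)
  have hdisj1 : Disjoint (Ioo (0:ℝ) y₀) (Ici y₀) := by
    rw [Set.disjoint_left]; intro x hx hx'; exact absurd hx.2 (not_lt.2 hx')
  have hdisj2 : Disjoint (Ioc (0:ℝ) y₀) (Ioi y₀) := by
    rw [Set.disjoint_left]; intro x hx hx'; exact absurd hx.2 (not_le.2 hx')
  have hsplit1 : (∫⁻ y in Ioi (0:ℝ), ENNReal.ofReal (ψ y)) = A := by
    rw [← Ioo_union_Ici_eq_Ioi hy₀, lintegral_union measurableSet_Ici hdisj1]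
    have hz : (∫⁻ y in Ici y₀, ENNReal.ofReal (ψ y)) = 0 := by
      rw [setLIntegral_congr_fun measurableSet_Ici
        (fun x hx => ENNReal.ofReal_eq_zero.2 (hψnp x hx)), lintegral_zero]
    rw [hz, add_zero]
  have hsplit2 : (∫⁻ y in Ioi (0:ℝ), ENNReal.ofReal (-ψ y)) = B := by
    rw [← Ioc_union_Ioi_eq_Ioi hy₀.le, lintegral_union measurableSet_Ioi hdisj2]
    have hz : (∫⁻ y in Ioc (0:ℝ) y₀, ENNReal.ofReal (-ψ y)) = 0 := by
      rw [setLIntegral_congr_fun measurableSet_Ioc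
        (fun x hx =>
          ENNReal.ofReal_eq_zero.2 (neg_nonpos.2 (hψnn x ⟨hx.1.le, hx.2⟩))), lintegral_zero]
    rw [hz, zero_add]
  have hsplitD : (∫⁻ y in Ioi (0:ℝ), ENNReal.ofReal (p y * φ y)) = C₁ + C₂ := by
    rw [← Ioc_union_Ioi_eq_Ioi hy₀.le, lintegral_union measurableSet_Ioi hdisj2]
    have : volume.restrict (Ioc (0:ℝ) y₀) = volume.restrict (Ioo (0:ℝ) y₀) :=
      Measure.restrict_congr_set Ioo_ae_eq_Ioc.symm
    rw [this]
  -- measurability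
  have haem : ∀ (f : ℝ → ℝ), (∀ x ∈ Ioi (0:ℝ), ContinuousAt f x) → ∀ s : Set ℝ, s ⊆ Ioi 0 →
      AEMeasurable (fun y => ENNReal.ofReal (f y)) (volume.restrict s) := by
    intro f hf s hs
    have h1 : ContinuousOn f (Ioi 0) := fun x hx => (hf x hx).continuousWithinAt
    have h2 : AEMeasurable f (volume.restrict (Ioi (0:ℝ))) :=
      h1.aemeasurable measurableSet_Ioi
    have h3 : AEMeasurable f (volume.restrict s) :=
      h2.mono_measure (Measure.restrict_mono hs le_rfl)
    exact ENNReal.measurable_ofReal.comp_aemeasurable h3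
  -- the sequence ε_n = y₀ / (n+1)
  set e : ℕ → ℝ := fun n => y₀ / (n + 1) with he_def
  have hepos : ∀ n, 0 < e n := fun n => div_pos hy₀ (by positivity)
  have heley : ∀ n, e n ≤ y₀ := by
    intro n
    rw [he_def]
    exact div_le_self hy₀.le (le_add_of_nonneg_left n.cast_nonneg)
  have hemono : ∀ m n : ℕ, m ≤ n → e n ≤ e m := by
    intro m n hmn
    show y₀ / ((n:ℝ) + 1) ≤ y₀ / ((m:ℝ) + 1)
    gcongr
  have hetends : Tendsto e atTop (nhds 0) := by
    have h1 : Tendsto (fun n : ℕ => (n : ℝ) + 1) atTop atTop :=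
      tendsto_atTop_add_const_right _ 1 tendsto_natCast_atTop_atTop
    exact Tendsto.div_atTop tendsto_const_nhds h1
  have hetend0 : Tendsto e atTop (nhdsWithin 0 (Ioi 0)) :=
    tendsto_nhdsWithin_of_tendsto_nhds_of_eventually_within _ hetends
      (Eventually.of_forall fun n => hepos n)
  have heUnion : (⋃ n, Ioo (e n) y₀) = Ioo 0 y₀ := by
    ext x
    simp only [Set.mem_iUnion, Set.mem_Ioo]
    constructor
    · rintro ⟨n, h1, h2⟩; exact ⟨lt_trans (hepos n) h1, h2⟩
    · rintro ⟨h1, h2⟩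
      have : ∀ᶠ n in atTop, e n < x := hetends.eventually (eventually_lt_nhds h1)
      obtain ⟨n, hn⟩ := this.exists
      exact ⟨n, hn, h2⟩
  have hesets : Monotone (fun n => Ioo (e n) y₀) :=
    fun m n hmn => Ioo_subset_Ioo (hemono m n hmn) le_rfl
  -- A and C₁ as limits
  have hAseq : Tendsto (fun n => ∫⁻ y in Ioo (e n) y₀, ENNReal.ofReal (ψ y)) atTop (nhds A) := by
    have hmo : Monotone (fun n => ∫⁻ y in Ioo (e n) y₀, ENNReal.ofReal (ψ y)) :=
      fun m n hmn => lintegral_mono_set (hesets hmn)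
    have := lintegral_iSup_sets (f := fun y => ENNReal.ofReal (ψ y))
      (fun n => measurableSet_Ioo) hesets
      (by rw [heUnion]; exact haem ψ hψc _ Ioo_subset_Ioi_self)
    rw [heUnion] at this
    rw [hA_def, this]
    exact tendsto_atTop_iSup hmo
  have hC₁seq : Tendsto (fun n => ∫⁻ y in Ioo (e n) y₀, ENNReal.ofReal (p y * φ y)) atTop
      (nhds C₁) := by
    have hmo : Monotone (fun n => ∫⁻ y in Ioo (e n) y₀, ENNReal.ofReal (p y * φ y)) :=
      fun m n hmn => lintegral_mono_set (hesets hmn)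
    have := lintegral_iSup_sets (f := fun y => ENNReal.ofReal (p y * φ y))
      (fun n => measurableSet_Ioo) hesets
      (by
        rw [heUnion]
        exact haem _ (fun x hx => (hpc x hx).mul (hφc x hx)) _ Ioo_subset_Ioi_self)
    rw [heUnion] at this
    rw [hC₁_def, this]
    exact tendsto_atTop_iSup hmo
  -- per-n identity on (ε_n, y₀)
  have hofA : ∀ n, ENNReal.ofReal (∫ x in (e n)..y₀, ψ x)
      = ∫⁻ y in Ioo (e n) y₀, ENNReal.ofReal (ψ y) := by
    intro n
    refine ofReal_intervalIntegral_eq (heley n) ?_ ?_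
    · exact fun x hx => (hψc x (hIccsub (hepos n) hx)).continuousWithinAt
    · exact fun x hx => hψnn x ⟨(lt_trans (hepos n) hx.1).le, hx.2.le⟩
  have hofC₁ : ∀ n, ENNReal.ofReal (∫ x in (e n)..y₀, p x * φ x)
      = ∫⁻ y in Ioo (e n) y₀, ENNReal.ofReal (p y * φ y) := by
    intro n
    refine ofReal_intervalIntegral_eq (heley n) ?_ ?_
    · exact fun x hx => (((hpc x (hIccsub (hepos n) hx)).mul
        (hφc x (hIccsub (hepos n) hx)))).continuousWithinAt
    · exact fun x hx => hpφnn x (lt_trans (hepos n) hx.1).le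
  have hEq1 : ∀ n, (∫⁻ y in Ioo (e n) y₀, ENNReal.ofReal (ψ y)) + ENNReal.ofReal (φ (e n))
      = (∫⁻ y in Ioo (e n) y₀, ENNReal.ofReal (p y * φ y)) + 1 := by
    intro n
    have hk := K1 (e n) y₀ (hepos n) (heley n)
    have hIψnn : 0 ≤ ∫ x in (e n)..y₀, ψ x :=
      intervalIntegral.integral_nonneg (heley n)
        (fun x hx => hψnn x ⟨le_trans (hepos n).le hx.1, hx.2⟩)
    have hIpnn : 0 ≤ ∫ x in (e n)..y₀, p x * φ x :=
      intervalIntegral.integral_nonneg (heley n)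
        (fun x hx => hpφnn x (le_trans (hepos n).le hx.1))
    calc (∫⁻ y in Ioo (e n) y₀, ENNReal.ofReal (ψ y)) + ENNReal.ofReal (φ (e n))
        = ENNReal.ofReal ((∫ x in (e n)..y₀, ψ x) + φ (e n)) := by
          rw [ENNReal.ofReal_add hIψnn (hφpos _).le, hofA n]
      _ = ENNReal.ofReal (φ y₀ + ∫ x in (e n)..y₀, p x * φ x) := by rw [hk]
      _ = (∫⁻ y in Ioo (e n) y₀, ENNReal.ofReal (p y * φ y)) + 1 := by
          rw [hφy₀, ENNReal.ofReal_add zero_le_one hIpnn, ENNReal.ofReal_one, hofC₁ n,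
            add_comm]
  -- F ε = -∫_ε^{y₀} q
  have hFe : ∀ ε : ℝ, F ε = -(∫ x in ε..y₀, q x) := by
    intro ε
    rw [hF_def]
    exact intervalIntegral.integral_symm ε y₀
  have hφe : ∀ n, ENNReal.ofReal (φ (e n))
      = ENNReal.ofReal (Real.exp (-(∫ x in (e n)..y₀, q x))) := by
    intro n
    show ENNReal.ofReal (Real.exp (F (e n))) = _
    rw [hFe (e n)]
  -- φ tends to 0 at +∞
  have hφtop : Tendsto φ atTop (nhds 0) := by
    obtain ⟨Cg, hCg⟩ := hgrow
    set C := max Cg 1 with hC_def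
    have hC1 : (1:ℝ) ≤ C := le_max_right _ _
    have hCpos : 0 < C := lt_of_lt_of_le one_pos hC1
    have hev : ∀ᶠ x in atTop, Real.sqrt (g x) / x ≤ C :=
      hCg.mono fun x hx => le_trans hx (le_max_left _ _)
    obtain ⟨a, ha⟩ := eventually_atTop.1 hev
    set x₀ := max a (max y₀ 1) with hx₀_def
    have hx₀y : y₀ ≤ x₀ := le_trans (le_max_left _ _) (le_max_right _ _)
    have hx₀1 : (1:ℝ) ≤ x₀ := le_trans (le_max_right _ _) (le_max_right _ _)
    have hx₀pos : 0 < x₀ := lt_of_lt_of_le one_pos hx₀1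
    have hgle : ∀ x, x₀ ≤ x → g x ≤ C^2 * x^2 := by
      intro x hx
      have hxpos : 0 < x := lt_of_lt_of_le hx₀pos hx
      have h1 : Real.sqrt (g x) / x ≤ C := ha x (le_trans (le_max_left _ _) hx)
      have h2 : Real.sqrt (g x) ≤ C * x := (div_le_iff₀ hxpos).1 h1
      have h3 : Real.sqrt (g x) ^ 2 ≤ (C * x)^2 := pow_le_pow_left₀ (Real.sqrt_nonneg _) h2 2
      rw [Real.sq_sqrt (hgnn x hxpos.le)] at h3
      calc g x ≤ (C*x)^2 := h3
        _ = C^2 * x^2 := by ring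
    have hqle : ∀ x, x₀ ≤ x → q x ≤ -(α / C^2) * (1 / x) := by
      intro x hx
      have hxpos : 0 < x := lt_of_lt_of_le hx₀pos hx
      have hgx : 0 < g x := hgpos x hxpos
      have s1 : q x ≤ (-(α * x)) / g x := by
        show (-α * x + h x) / g x ≤ (-(α * x)) / g x
        apply (div_le_div_iff_of_pos_right hgx).2
        have := hhle x (le_trans hx₀y hx)
        linarith
      have s2 : (-(α * x)) / g x ≤ -(α / C^2) * (1/x) := by
        rw [neg_div, neg_mul]
        apply neg_le_neg
        have e1 : α / C^2 * (1/x) = α * x / (C^2 * x^2) := by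
          field_simp
        rw [e1]
        gcongr
        exact hgle x hx
      linarith
    have hFle : ∀ R, x₀ ≤ R →
        F R ≤ F x₀ + (α/C^2) * Real.log x₀ - (α/C^2) * Real.log R := by
      intro R hR
      have hRpos : 0 < R := lt_of_lt_of_le hx₀pos hR
      have hsplit : F R = F x₀ + ∫ x in x₀..R, q x := by
        show (∫ x in y₀..R, q x) = (∫ x in y₀..x₀, q x) + ∫ x in x₀..R, q x
        exact (intervalIntegral.integral_add_adjacent_intervals
          (hqint y₀ x₀ hy₀ hx₀pos) (hqint x₀ R hx₀pos hRpos)).symm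
      have hint2 : IntervalIntegrable (fun x => -(α/C^2) * (1/x)) volume x₀ R := by
        apply ContinuousOn.intervalIntegrable
        apply ContinuousOn.mul continuousOn_const
        apply ContinuousOn.div continuousOn_const continuousOn_id
        intro x hx
        exact ne_of_gt (huIccsub hx₀pos hRpos hx)
      have hmono := intervalIntegral.integral_mono_on hR (hqint x₀ R hx₀pos hRpos) hint2
        (fun x hx => hqle x hx.1)
      have hval : (∫ x in x₀..R, -(α/C^2) * (1/x)) = -(α/C^2) * Real.log (R/x₀) := by
        rw [intervalIntegral.integral_const_mul, integral_one_div_of_pos hx₀pos hRpos]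
      rw [hval, Real.log_div (ne_of_gt hRpos) (ne_of_gt hx₀pos)] at hmono
      rw [hsplit]
      nlinarith [hmono]
    have hFtop : Tendsto F atTop atBot := by
      have h2 : Tendsto (fun R : ℝ => (α/C^2) * Real.log R) atTop atTop :=
        Real.tendsto_log_atTop.const_mul_atTop (div_pos hα (pow_pos hCpos 2))
      have h3 : Tendsto (fun R : ℝ => -((α/C^2) * Real.log R)) atTop atBot :=
        tendsto_neg_atTop_atBot.comp h2
      have hlog : Tendsto (fun R => F x₀ + (α/C^2)*Real.log x₀ - (α/C^2) * Real.log R)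
          atTop atBot := by
        simpa [sub_eq_add_neg] using
          tendsto_atBot_add_const_left atTop (F x₀ + (α/C^2)*Real.log x₀) h3
      exact tendsto_atBot_mono' atTop (eventually_atTop.2 ⟨x₀, hFle⟩) hlog
    exact Real.tendsto_exp_atBot.comp hFtop
  -- the sequence r_n = y₀ + (n+1) and the identity on (y₀, ∞)
  set r : ℕ → ℝ := fun n => y₀ + (n + 1) with hr_def
  have hrge : ∀ n, y₀ ≤ r n := fun n => le_add_of_nonneg_right (by positivity)
  have hrpos : ∀ n, 0 < r n := fun n => lt_of_lt_of_le hy₀ (hrge n)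
  have hrmono : ∀ m n : ℕ, m ≤ n → r m ≤ r n := by
    intro m n hmn
    show y₀ + ((m:ℝ) + 1) ≤ y₀ + ((n:ℝ) + 1)
    gcongr
  have hrsets : Monotone (fun n => Ioo y₀ (r n)) :=
    fun m n hmn => Ioo_subset_Ioo le_rfl (hrmono m n hmn)
  have hrtop : Tendsto r atTop atTop := by
    apply tendsto_atTop_add_const_left
    exact tendsto_atTop_add_const_right _ 1 tendsto_natCast_atTop_atTop
  have hrUnion : (⋃ n, Ioo y₀ (r n)) = Ioi y₀ := by
    ext x
    simp only [Set.mem_iUnion, Set.mem_Ioo, Set.mem_Ioi]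
    constructor
    · rintro ⟨n, h1, _⟩; exact h1
    · intro h1
      obtain ⟨n, hn⟩ := exists_nat_gt (x - y₀)
      refine ⟨n, h1, ?_⟩
      show x < y₀ + ((n:ℝ) + 1)
      linarith
  have hIoiy₀sub : Ioi y₀ ⊆ Ioi (0:ℝ) := fun x hx => lt_trans hy₀ hx
  have hBseq : Tendsto (fun n => ∫⁻ y in Ioo y₀ (r n), ENNReal.ofReal (-ψ y)) atTop
      (nhds B) := by
    have hmo : Monotone (fun n => ∫⁻ y in Ioo y₀ (r n), ENNReal.ofReal (-ψ y)) :=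
      fun m n hmn => lintegral_mono_set (hrsets hmn)
    have := lintegral_iSup_sets (f := fun y => ENNReal.ofReal (-ψ y))
      (fun n => measurableSet_Ioo) hrsets
      (by
        rw [hrUnion]
        exact haem _ (fun x hx => (hψc x hx).neg) _ hIoiy₀sub)
    rw [hrUnion] at this
    rw [hB_def, this]
    exact tendsto_atTop_iSup hmo
  have hC₂seq : Tendsto (fun n => ∫⁻ y in Ioo y₀ (r n), ENNReal.ofReal (p y * φ y)) atTop
      (nhds C₂) := by
    have hmo : Monotone (fun n => ∫⁻ y in Ioo y₀ (r n), ENNReal.ofReal (p y * φ y)) :=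
      fun m n hmn => lintegral_mono_set (hrsets hmn)
    have := lintegral_iSup_sets (f := fun y => ENNReal.ofReal (p y * φ y))
      (fun n => measurableSet_Ioo) hrsets
      (by
        rw [hrUnion]
        exact haem _ (fun x hx => (hpc x hx).mul (hφc x hx)) _ hIoiy₀sub)
    rw [hrUnion] at this
    rw [hC₂_def, this]
    exact tendsto_atTop_iSup hmo
  have hEq2 : ∀ n, ENNReal.ofReal (φ (r n)) +
      ((∫⁻ y in Ioo y₀ (r n), ENNReal.ofReal (p y * φ y)) +
       (∫⁻ y in Ioo y₀ (r n), ENNReal.ofReal (-ψ y))) = 1 := by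
    intro n
    have hk := K1 y₀ (r n) hy₀ (hrge n)
    rw [hφy₀] at hk
    have hIψ : (∫ x in y₀..(r n), -ψ x) = -(∫ x in y₀..(r n), ψ x) :=
      intervalIntegral.integral_neg
    have hreal : φ (r n) + ((∫ x in y₀..(r n), p x * φ x) + (∫ x in y₀..(r n), -ψ x)) = 1 := by
      rw [hIψ]; linarith
    have hIpnn : 0 ≤ ∫ x in y₀..(r n), p x * φ x :=
      intervalIntegral.integral_nonneg (hrge n)
        (fun x hx => hpφnn x (le_trans hy₀.le hx.1))
    have hIψnn : 0 ≤ ∫ x in y₀..(r n), -ψ x :=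
      intervalIntegral.integral_nonneg (hrge n)
        (fun x hx => neg_nonneg.2 (hψnp x hx.1))
    have hofB : ENNReal.ofReal (∫ x in y₀..(r n), -ψ x)
        = ∫⁻ y in Ioo y₀ (r n), ENNReal.ofReal (-ψ y) := by
      refine ofReal_intervalIntegral_eq (hrge n) ?_ ?_
      · exact fun x hx => ((hψc x (hIccsub hy₀ hx)).neg).continuousWithinAt
      · exact fun x hx => neg_nonneg.2 (hψnp x hx.1.le)
    have hofC₂ : ENNReal.ofReal (∫ x in y₀..(r n), p x * φ x)
        = ∫⁻ y in Ioo y₀ (r n), ENNReal.ofReal (p y * φ y) := by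
      refine ofReal_intervalIntegral_eq (hrge n) ?_ ?_
      · exact fun x hx => ((hpc x (hIccsub hy₀ hx)).mul (hφc x (hIccsub hy₀ hx))).continuousWithinAt
      · exact fun x hx => hpφnn x (le_trans hy₀.le hx.1.le)
    calc ENNReal.ofReal (φ (r n)) +
        ((∫⁻ y in Ioo y₀ (r n), ENNReal.ofReal (p y * φ y)) +
         (∫⁻ y in Ioo y₀ (r n), ENNReal.ofReal (-ψ y)))
        = ENNReal.ofReal (φ (r n) + ((∫ x in y₀..(r n), p x * φ x) + (∫ x in y₀..(r n), -ψ x))) := by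
          rw [ENNReal.ofReal_add (hφpos _).le (add_nonneg hIpnn hIψnn),
            ENNReal.ofReal_add hIpnn hIψnn, hofB, hofC₂]
      _ = 1 := by rw [hreal, ENNReal.ofReal_one]
  have hBC₂ : C₂ + B = 1 := by
    have hφr : Tendsto (fun n => ENNReal.ofReal (φ (r n))) atTop (nhds 0) := by
      have h2 : Tendsto (fun n => φ (r n)) atTop (nhds 0) := hφtop.comp hrtop
      have h3 := (ENNReal.continuous_ofReal.tendsto _).comp h2
      rwa [ENNReal.ofReal_zero] at h3
    have t1 : Tendsto (fun n => ENNReal.ofReal (φ (r n)) +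
        ((∫⁻ y in Ioo y₀ (r n), ENNReal.ofReal (p y * φ y)) +
         (∫⁻ y in Ioo y₀ (r n), ENNReal.ofReal (-ψ y)))) atTop (nhds (0 + (C₂ + B))) :=
      hφr.add (hC₂seq.add hBseq)
    have t2 : Tendsto (fun _ : ℕ => (1:ℝ≥0∞)) atTop (nhds 1) := tendsto_const_nhds
    have := tendsto_nhds_unique ((tendsto_congr hEq2).1 t1) t2
    rwa [zero_add] at this
  -- positivity of C₁
  have hC₁pos : 0 < C₁ := by
    have hhalf : 0 < y₀ / 2 := half_pos hy₀
    have hint : IntervalIntegrable (fun x => p x * φ x) volume (y₀/2) y₀ :=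
      ContinuousOn.intervalIntegrable (fun x hx =>
        ((hpc x (huIccsub hhalf hy₀ hx)).mul (hφc x (huIccsub hhalf hy₀ hx))).continuousWithinAt)
    have h1 : 0 < ∫ x in (y₀/2)..y₀, p x * φ x :=
      intervalIntegral_pos_of_pos_on hint
        (fun x hx => hpφpos x (lt_trans hhalf hx.1)) (half_lt_self hy₀)
    have h2 : ENNReal.ofReal (∫ x in (y₀/2)..y₀, p x * φ x)
        = ∫⁻ y in Ioo (y₀/2) y₀, ENNReal.ofReal (p y * φ y) := by
      refine ofReal_intervalIntegral_eq (half_le_self hy₀.le) ?_ ?_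
      · exact fun x hx => ((hpc x (hIccsub hhalf hx)).mul (hφc x (hIccsub hhalf hx))).continuousWithinAt
      · exact fun x hx => hpφnn x (lt_trans hhalf hx.1).le
    calc (0:ℝ≥0∞) < ENNReal.ofReal (∫ x in (y₀/2)..y₀, p x * φ x) := ENNReal.ofReal_pos.2 h1
      _ = ∫⁻ y in Ioo (y₀/2) y₀, ENNReal.ofReal (p y * φ y) := h2
      _ ≤ C₁ := lintegral_mono_set (Ioo_subset_Ioo hhalf.le le_rfl)
  -- value of the condition-(72) integral
  have hD : ∀ Lr : ℝ, (∫⁻ y in Ioi (0:ℝ), ENNReal.ofReal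
        (α * y / g y * Real.exp (Lr + ∫ x in y₀..y, q x)))
      = ENNReal.ofReal (Real.exp Lr) * (C₁ + C₂) := by
    intro Lr
    have h1 : ∀ y : ℝ, ENNReal.ofReal (α * y / g y * Real.exp (Lr + ∫ x in y₀..y, q x))
        = ENNReal.ofReal (Real.exp Lr) * ENNReal.ofReal (p y * φ y) := by
      intro y
      rw [← ENNReal.ofReal_mul (Real.exp_pos Lr).le]
      congr 1
      rw [Real.exp_add]
      show α * y / g y * (Real.exp Lr * Real.exp (∫ x in y₀..y, q x))
        = Real.exp Lr * (α * y / g y * Real.exp (F y))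
      show α * y / g y * (Real.exp Lr * Real.exp (∫ x in y₀..y, q x))
        = Real.exp Lr * (α * y / g y * Real.exp (∫ x in y₀..y, q x))
      ring
    simp only [h1]
    rw [lintegral_const_mul' _ _ ENNReal.ofReal_ne_top, hsplitD]
  -- final assembly
  rw [hsplit1, hsplit2]
  rcases hL with ⟨L, hLt⟩ | hTop
  · have ht1 : Tendsto (fun n => ∫ x in (e n)..y₀, q x) atTop (nhds L) := hLt.comp hetend0
    have ht2 : Tendsto (fun n => ENNReal.ofReal (φ (e n))) atTop
        (nhds (ENNReal.ofReal (Real.exp (-L)))) := by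
      have h2 : Tendsto (fun n => Real.exp (-(∫ x in (e n)..y₀, q x))) atTop
          (nhds (Real.exp (-L))) := (Real.continuous_exp.tendsto _).comp ht1.neg
      have h3 := (ENNReal.continuous_ofReal.tendsto _).comp h2
      exact (tendsto_congr hφe).2 h3
    have hAE : A + ENNReal.ofReal (Real.exp (-L)) = C₁ + 1 := by
      have t3 := hAseq.add ht2
      have t4 : Tendsto (fun n => (∫⁻ y in Ioo (e n) y₀, ENNReal.ofReal (ψ y))
          + ENNReal.ofReal (φ (e n))) atTop (nhds (C₁ + 1)) := by
        refine (tendsto_congr hEq1).2 ?_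
        exact hC₁seq.add tendsto_const_nhds
      exact tendsto_nhds_unique t3 t4
    have hC₂le : C₂ ≤ 1 := hBC₂ ▸ le_self_add
    have hBle : B ≤ 1 := hBC₂ ▸ le_add_self
    have hC₂top : C₂ ≠ ⊤ := fun hc => by simp [hc] at hC₂le
    set E := ENNReal.ofReal (Real.exp (-L)) with hE_def
    have hEtop : E ≠ ⊤ := ENNReal.ofReal_ne_top
    have hkey : (A ≤ B) ↔ C₁ + C₂ ≤ E := by
      constructor
      · intro hle
        have h2 : C₁ + C₂ + 1 ≤ E + 1 := by
          calc C₁ + C₂ + 1 = (A + E) + C₂ := by rw [hAE]; ring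
            _ = (A + C₂) + E := by ring
            _ ≤ (B + C₂) + E := by gcongr
            _ = E + 1 := by rw [add_comm B C₂, hBC₂]; ring
        exact (ENNReal.add_le_add_iff_right ENNReal.one_ne_top).1 h2
      · intro hle
        have h1 : A + (E + C₂) ≤ B + (E + C₂) := by
          calc A + (E + C₂) = (A + E) + C₂ := by ring
            _ = C₁ + 1 + C₂ := by rw [hAE]
            _ = (C₁ + C₂) + 1 := by ring
            _ ≤ E + 1 := by gcongr
            _ = E + (C₂ + B) := by rw [hBC₂]
            _ = B + (E + C₂) := by ring
        exact (ENNReal.add_le_add_iff_right (ENNReal.add_ne_top.2 ⟨hEtop, hC₂top⟩)).1 h1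
    constructor
    · intro hle
      refine ⟨L, hLt, ?_⟩
      rw [hD L]
      have h1 : C₁ + C₂ ≤ E := hkey.1 hle
      calc ENNReal.ofReal (Real.exp L) * (C₁ + C₂)
          ≤ ENNReal.ofReal (Real.exp L) * E := by gcongr
        _ = ENNReal.ofReal (Real.exp L * Real.exp (-L)) := by
            rw [hE_def, ENNReal.ofReal_mul (Real.exp_pos L).le]
        _ = 1 := by rw [← Real.exp_add, add_neg_cancel, Real.exp_zero, ENNReal.ofReal_one]
    · rintro ⟨L', hLt', hDle⟩
      have hLL : L' = L := tendsto_nhds_unique hLt' hLt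
      rw [hLL, hD L] at hDle
      apply hkey.2
      have h3 : E * ENNReal.ofReal (Real.exp L) = 1 := by
        rw [hE_def, ← ENNReal.ofReal_mul (Real.exp_pos _).le, ← Real.exp_add,
          neg_add_cancel, Real.exp_zero, ENNReal.ofReal_one]
      calc C₁ + C₂ = E * ENNReal.ofReal (Real.exp L) * (C₁ + C₂) := by rw [h3, one_mul]
        _ = E * (ENNReal.ofReal (Real.exp L) * (C₁ + C₂)) := by rw [mul_assoc]
        _ ≤ E * 1 := mul_le_mul_right hDle E
        _ = E := mul_one E
  · have ht2 : Tendsto (fun n => ENNReal.ofReal (φ (e n))) atTop (nhds 0) := by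
      have ht1 : Tendsto (fun n => ∫ x in (e n)..y₀, q x) atTop atTop := hTop.comp hetend0
      have h2 : Tendsto (fun n => Real.exp (-(∫ x in (e n)..y₀, q x))) atTop (nhds 0) :=
        Real.tendsto_exp_atBot.comp (tendsto_neg_atTop_atBot.comp ht1)
      have h3 := (ENNReal.continuous_ofReal.tendsto _).comp h2
      rw [ENNReal.ofReal_zero] at h3
      exact (tendsto_congr hφe).2 h3
    have hAE : A + 0 = C₁ + 1 := by
      refine tendsto_nhds_unique (hAseq.add ht2) ?_
      refine (tendsto_congr hEq1).2 ?_
      exact hC₁seq.add tendsto_const_nhds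
    rw [add_zero] at hAE
    apply iff_of_false
    · intro hle
      have hBle : B ≤ 1 := hBC₂ ▸ le_add_self
      have h1 : C₁ + 1 ≤ 0 + 1 := by
        rw [← hAE, zero_add]
        exact le_trans hle hBle
      have h2 : C₁ ≤ 0 := (ENNReal.add_le_add_iff_right ENNReal.one_ne_top).1 h1
      exact hC₁pos.ne' (le_antisymm h2 zero_le)
    · rintro ⟨L', hLt', _⟩
      exact not_tendsto_nhds_of_tendsto_atTop hTop L' hLt'
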